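/- Let n ≥ 2, r ≥ 1, let 1 > λ_1 > λ_2 > … > λ_r > 0 be real numbers, and let n_1, …, n_r be positive integers with Σ_{j=1}^r n_j = n − 1. Let F be an n×n real matrix whose characteristic polynomial equals (X − 1)·Π_{j=1}^r (X − λ_j)^{n_j}, and let h, g ∈ ℝ^n. Define t_k := hᵀ F^{k−1} g for k ≥ 1, and suppose there is a positive integer k₀ with t_{k₀} = 0 and t_k > 0 for every k > k₀. Suppose further that M ≥ 1, P is an n×M real matrix, A is an M×M real matrix, and b, c ∈ ℝ^M, with all entries of A, b, c nonnegative, such that FP = PA, Pb = g, and cᵀ = hᵀP (i.e. (c, A, b) is a cone-generated positive realization of dimension M). Then M(n−1) ≥ k₀, i.e. M ≥ k₀/(n−1). -/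

import Mathlib

open Matrix Polynomial

noncomputable section ConeGeneratedAux


noncomputable def ep {k : ℕ} (a : Fin k → ℝ) (q : Fin k → Polynomial ℝ) : ℝ → ℝ :=
  fun x => ∑ l, (q l).eval x * Real.exp (a l * x)

lemma ep_hasDerivAt {k : ℕ} (a : Fin k → ℝ) (q : Fin k → Polynomial ℝ) (x : ℝ) :
    HasDerivAt (ep a q)
      (ep a (fun l => derivative (q l) + C (a l) * (q l)) x) x := by
  unfold ep
  have : ∀ l : Fin k,
      HasDerivAt (fun x => (q l).eval x * Real.exp (a l * x))
        ((derivative (q l) + C (a l) * (q l)).eval x * Real.exp (a l * x)) x := by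
    intro l
    have h1 : HasDerivAt (fun x => (q l).eval x) ((derivative (q l)).eval x) x :=
      (q l).hasDerivAt x
    have h2 : HasDerivAt (fun x : ℝ => a l * x) (a l) x := by
      simpa using (hasDerivAt_id x).const_mul (a l)
    have h3 : HasDerivAt (fun x : ℝ => Real.exp (a l * x))
        (Real.exp (a l * x) * a l) x := h2.exp
    have := h1.fun_mul h3
    refine this.congr_deriv ?_
    simp [eval_add, eval_mul]
    ring
  simpa using HasDerivAt.fun_sum (fun l _ => this l)

lemma ep_differentiable {k : ℕ} (a : Fin k → ℝ) (q : Fin k → Polynomial ℝ) :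
    Differentiable ℝ (ep a q) := fun x => (ep_hasDerivAt a q x).differentiableAt

lemma ep_deriv {k : ℕ} (a : Fin k → ℝ) (q : Fin k → Polynomial ℝ) :
    deriv (ep a q) = ep a (fun l => derivative (q l) + C (a l) * (q l)) := by
  funext x; exact (ep_hasDerivAt a q x).deriv

/-- Rolle step: from m+1 zeros of a differentiable function get m zeros of its derivative. -/
lemma rolle_step (f : ℝ → ℝ) (hf : Differentiable ℝ f) (m : ℕ) (Z : Finset ℝ)
    (hcard : Z.card = m + 1) (hz : ∀ x ∈ Z, f x = 0) :
    ∃ Z' : Finset ℝ, Z'.card = m ∧ ∀ x ∈ Z', deriv f x = 0 := by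
  have e := Z.orderIsoOfFin hcard
  have key : ∀ i : Fin m, ∃ c ∈ Set.Ioo ((e i.castSucc : ℝ)) ((e i.succ : ℝ)), deriv f c = 0 := by
    intro i
    have hlt : ((e i.castSucc : ℝ)) < ((e i.succ : ℝ)) := by
      have : i.castSucc < i.succ := Fin.castSucc_lt_succ (i := i)
      exact_mod_cast (e.lt_iff_lt.2 this)
    exact exists_deriv_eq_zero hlt (hf.continuous.continuousOn)
      (by rw [hz _ (e i.castSucc).2, hz _ (e i.succ).2])
  choose c hc hdc using key
  have hmono : StrictMono c := by
    intro i j hij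
    have h1 : c i < (e i.succ : ℝ) := (hc i).2
    have h2 : ((e j.castSucc : ℝ)) < c j := (hc j).1
    have h3 : ((e i.succ : ℝ)) ≤ ((e j.castSucc : ℝ)) := by
      have : i.succ ≤ j.castSucc := by
        rw [Fin.succ_le_castSucc_iff]; exact hij
      rcases lt_or_eq_of_le this with h | h
      · exact le_of_lt (by exact_mod_cast e.lt_iff_lt.2 h)
      · rw [h]
    linarith
  refine ⟨Finset.image c Finset.univ, ?_, ?_⟩
  · rw [Finset.card_image_of_injective _ hmono.injective, Finset.card_univ, Fintype.card_fin]
  · intro x hx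
    rcases Finset.mem_image.1 hx with ⟨i, _, rfl⟩
    exact hdc i

lemma kill_poly (b : ℝ) (hb : b ≠ 0) (p : Polynomial ℝ) (h : derivative p + C b * p = 0) : p = 0 := by
  by_contra hp
  have hco : (derivative p + C b * p).coeff p.natDegree = 0 := by rw [h]; simp
  rw [coeff_add, coeff_C_mul, coeff_derivative,
    coeff_eq_zero_of_natDegree_lt (by omega : p.natDegree < p.natDegree + 1)] at hco
  simp at hco
  rcases hco with h1 | h2
  · exact hb h1
  · exact hp h2

/-- An exponential polynomial with distinct rates and total degree ≤ N vanishing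
at N distinct points is identically zero (all coefficient polynomials vanish). -/
theorem zc : ∀ N : ℕ, ∀ k : ℕ, ∀ a : Fin k → ℝ, Function.Injective a →
    ∀ q : Fin k → Polynomial ℝ, (∑ l, ((q l).natDegree + 1)) ≤ N →
    ∀ Z : Finset ℝ, N ≤ Z.card → (∀ x ∈ Z, ep a q x = 0) → ∀ l, q l = 0 := by
  intro N
  induction N using Nat.strong_induction_on with
  | _ N IH =>
  intro k a ha q hdeg Z hcard hzero
  match k with
  | 0 => exact fun l => l.elim0
  | (k' + 1) =>
    -- basic facts
    set lst : Fin (k' + 1) := Fin.last k' with hlst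
    set b : Fin (k' + 1) → ℝ := fun l => a l - a lst with hb
    have hbinj : Function.Injective b := fun x y hxy => ha (by
      have : a x - a lst = a y - a lst := hxy
      linarith)
    have hblst : b lst = 0 := by simp [hb]
    have hbne : ∀ l, l ≠ lst → b l ≠ 0 := by
      intro l hl
      simp only [hb, sub_ne_zero]
      exact fun hh => hl (ha hh)
    have hN1 : 1 ≤ N := by
      have h1 : (q lst).natDegree + 1 ≤ ∑ l, ((q l).natDegree + 1) :=
        Finset.single_le_sum (f := fun l => (q l).natDegree + 1) (fun i _ => Nat.zero_le _)
          (Finset.mem_univ lst)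
      omega
    -- g = ep b q has the same zeros
    have hgzero : ∀ x ∈ Z, ep b q x = 0 := by
      intro x hx
      have : ep b q x = ep a q x * Real.exp (-(a lst) * x) := by
        simp only [ep, Finset.sum_mul]
        refine Finset.sum_congr rfl (fun l _ => ?_)
        rw [mul_assoc, ← Real.exp_add]
        ring_nf
        simp only [hb]; ring_nf
      rw [this, hzero x hx, zero_mul]
    -- derivative data
    set qt : Fin (k' + 1) → Polynomial ℝ := fun l => derivative (q l) + C (b l) * (q l) with hqt
    have hqtlst : qt lst = derivative (q lst) := by simp [hqt, hblst]
    -- take subset of card N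
    obtain ⟨Z0, hZ0sub, hZ0card⟩ := Finset.exists_subset_card_eq hcard
    obtain ⟨N', hN'⟩ : ∃ N', N = N' + 1 := ⟨N - 1, by omega⟩
    obtain ⟨Z', hZ'card, hZ'zero⟩ := rolle_step (ep b q) (ep_differentiable b q) N' Z0
      (by omega) (fun x hx => hgzero x (hZ0sub hx))
    rw [ep_deriv] at hZ'zero
    have hqtdeg : ∀ l, l ≠ lst → (qt l).natDegree ≤ (q l).natDegree := by
      intro l _
      refine le_trans (natDegree_add_le _ _) (max_le ?_ ?_)
      · exact le_trans (natDegree_derivative_le _) (by omega)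
      · exact natDegree_C_mul_le _ _
    by_cases hconst : (q lst).natDegree = 0
    · -- constant case: drop the last index
      have hqtz : qt lst = 0 := by
        rw [hqtlst]
        exact derivative_of_natDegree_zero hconst
      have hrestr : ∀ x, ep b qt x = ep (fun i : Fin k' => b i.castSucc) (fun i => qt i.castSucc) x := by
        intro x
        simp only [ep]
        rw [Fin.sum_univ_castSucc (f := fun l => (qt l).eval x * Real.exp (b l * x))]
        simp [← hlst, hqtz]
      have hdeg' : (∑ i : Fin k', ((qt i.castSucc).natDegree + 1)) ≤ N' := by
        have h1 : (∑ i : Fin k', ((qt i.castSucc).natDegree + 1)) ≤ ∑ i : Fin k', ((q i.castSucc).natDegree + 1) := by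
          refine Finset.sum_le_sum (fun i _ => ?_)
          have := hqtdeg i.castSucc (by simp [hlst, Fin.ext_iff]; omega)
          omega
        have h2 : (∑ i : Fin k', ((q i.castSucc).natDegree + 1)) + 1 ≤ N := by
          calc (∑ i : Fin k', ((q i.castSucc).natDegree + 1)) + 1
              = ∑ l, ((q l).natDegree + 1) := by
                rw [Fin.sum_univ_castSucc (f := fun l => (q l).natDegree + 1)]
                simp [hconst, ← hlst]
            _ ≤ N := hdeg
        omega
      have hall := IH N' (by omega) k' (fun i => b i.castSucc)
        (fun x y hxy => by
          have := hbinj hxy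
          exact Fin.castSucc_injective _ this)
        (fun i => qt i.castSucc) hdeg' Z' (by omega)
        (fun x hx => by rw [← hrestr]; exact hZ'zero x hx)
      -- recover: q l = 0 for l ≠ lst
      have hq0 : ∀ l, l ≠ lst → q l = 0 := by
        intro l hl
        obtain ⟨i, rfl⟩ := Fin.exists_castSucc_eq.2 hl
        exact kill_poly _ (hbne _ hl) _ (hall i)
      -- and q lst = 0 using a zero of f
      have hZne : Z.Nonempty := Finset.card_pos.1 (by omega)
      obtain ⟨x0, hx0⟩ := hZne
      have hev := hzero x0 hx0
      rw [ep, Fin.sum_univ_castSucc (f := fun l => (q l).eval x0 * Real.exp (a l * x0))] at hev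
      have hz' : ∀ i : Fin k', q i.castSucc = 0 := fun i => hq0 _ (by simp [hlst, Fin.ext_iff]; omega)
      have hsum0 : (∑ i : Fin k', (q i.castSucc).eval x0 * Real.exp (a i.castSucc * x0)) = 0 :=
        Finset.sum_eq_zero (fun i _ => by rw [hz' i]; simp)
      rw [hsum0, zero_add] at hev
      rcases mul_eq_zero.1 hev with h | h
      · intro l
        by_cases hl : l = lst
        · rw [hl, eq_C_of_natDegree_eq_zero hconst]
          have hc0 : (q lst).coeff 0 = 0 := by
            rw [eq_C_of_natDegree_eq_zero hconst] at h
            simpa using h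
          rw [hc0, map_zero]
        · exact hq0 l hl
      · exact absurd h (Real.exp_ne_zero _)
    · -- nonconstant case: derivative drops the degree
      have hdeg' : (∑ l, ((qt l).natDegree + 1)) ≤ N' := by
        have h2 : (qt lst).natDegree + 1 ≤ (q lst).natDegree := by
          rw [hqtlst]
          have := natDegree_derivative_lt hconst
          omega
        calc (∑ l, ((qt l).natDegree + 1))
            = (∑ i : Fin k', ((qt i.castSucc).natDegree + 1)) + ((qt lst).natDegree + 1) := by
              rw [Fin.sum_univ_castSucc (f := fun l => (qt l).natDegree + 1)]
          _ ≤ (∑ i : Fin k', ((q i.castSucc).natDegree + 1)) + (q lst).natDegree := by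
              exact Nat.add_le_add (Finset.sum_le_sum (fun i _ => by
                have := hqtdeg i.castSucc (by simp [hlst, Fin.ext_iff]; omega)
                omega)) h2
          _ ≤ N' := by
              have : (∑ i : Fin k', ((q i.castSucc).natDegree + 1)) + ((q lst).natDegree + 1) ≤ N := by
                rw [← Fin.sum_univ_castSucc (f := fun l => (q l).natDegree + 1)]
                exact hdeg
              omega
      have hall := IH N' (by omega) (k' + 1) b hbinj qt hdeg' Z' (by omega) hZ'zero
      exfalso
      have hd := hall lst
      rw [hqtlst] at hd
      exact hconst (natDegree_eq_zero_of_derivative_eq_zero hd)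



def shiftE : Module.End ℝ (ℕ → ℝ) where
  toFun s := fun m => s (m + 1)
  map_add' s t := rfl
  map_smul' c s := rfl

lemma shiftE_pow (i : ℕ) (s : ℕ → ℝ) (m : ℕ) : ((shiftE ^ i) s) m = s (m + i) := by
  induction i generalizing s m with
  | zero => rfl
  | succ i ih =>
    rw [pow_succ]
    have : ((shiftE ^ i * shiftE) s) = (shiftE ^ i) (shiftE s) := rfl
    rw [this, ih]
    show s (m + i + 1) = s (m + (i + 1))
    ring_nf

def Killed (p : Polynomial ℝ) (s : ℕ → ℝ) : Prop := (Polynomial.aeval shiftE) p s = 0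

lemma killed_of_dvd {p P : Polynomial ℝ} {s : ℕ → ℝ} (hdvd : p ∣ P) (h : Killed p s) :
    Killed P s := by
  obtain ⟨q, rfl⟩ := hdvd
  unfold Killed at *
  rw [mul_comm, _root_.map_mul]
  show (aeval shiftE q) ((aeval shiftE p) s) = 0
  rw [h, map_zero]

lemma killed_sub {p : Polynomial ℝ} {s t : ℕ → ℝ} (hs : Killed p s) (ht : Killed p t) :
    Killed p (s - t) := by
  unfold Killed at *
  rw [map_sub, hs, ht, sub_zero]

lemma killed_sum {p : Polynomial ℝ} {k : ℕ} (f : Fin k → (ℕ → ℝ))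
    (h : ∀ l, Killed p (f l)) : Killed p (fun m => ∑ l, f l m) := by
  unfold Killed at *
  have : (fun m => ∑ l, f l m) = ∑ l, f l := by
    funext m
    simp [Finset.sum_apply]
  rw [this, map_sum]
  exact Finset.sum_eq_zero (fun l _ => h l)

lemma aeval_shift_apply (p : Polynomial ℝ) (s : ℕ → ℝ) (m : ℕ) :
    ((Polynomial.aeval shiftE) p s) m
      = ∑ i ∈ Finset.range (p.natDegree + 1), p.coeff i * s (m + i) := by
  rw [aeval_eq_sum_range]
  have h2 : (∑ i ∈ Finset.range (p.natDegree + 1), p.coeff i • shiftE ^ i) s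
      = ∑ i ∈ Finset.range (p.natDegree + 1), (p.coeff i • shiftE ^ i) s :=
    LinearMap.sum_apply _ _ _
  rw [h2, Finset.sum_apply]
  refine Finset.sum_congr rfl (fun i _ => ?_)
  show (p.coeff i • ((shiftE ^ i) s)) m = _
  rw [Pi.smul_apply, shiftE_pow]
  simp [smul_eq_mul]

lemma killed_eval {p : Polynomial ℝ} {s : ℕ → ℝ} (h : Killed p s) (m : ℕ) :
    ∑ i ∈ Finset.range (p.natDegree + 1), p.coeff i * s (m + i) = 0 := by
  rw [← aeval_shift_apply]
  unfold Killed at h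
  rw [h]
  rfl

lemma killed_of_sum {p : Polynomial ℝ} {s : ℕ → ℝ}
    (h : ∀ m, ∑ i ∈ Finset.range (p.natDegree + 1), p.coeff i * s (m + i) = 0) :
    Killed p s := by
  unfold Killed
  funext m
  rw [aeval_shift_apply]
  exact h m

lemma killed_linear_comb {μ : ℝ} (q : Polynomial ℝ) (s : ℕ → ℝ)
    (hs : s = fun m : ℕ => q.eval (m : ℝ) * μ ^ m) :
    (aeval shiftE) (X - C μ) s
      = fun m : ℕ => (C μ * (q.comp (X + 1) - q)).eval (m : ℝ) * μ ^ m := by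
  funext m
  rw [map_sub, aeval_X, aeval_C]
  show (shiftE s - (algebraMap ℝ (Module.End ℝ (ℕ → ℝ)) μ) s) m = _
  have h1 : (shiftE s) m = s (m + 1) := rfl
  have h2 : ((algebraMap ℝ (Module.End ℝ (ℕ → ℝ)) μ) s) m = μ * s m := by
    rw [Module.algebraMap_end_apply, Pi.smul_apply, smul_eq_mul]
  rw [Pi.sub_apply, h1, h2, hs]
  simp only [eval_mul, eval_C, eval_sub, eval_comp, eval_add, eval_X, eval_one]
  push_cast
  ring

lemma comp_sub_natDegree (q : Polynomial ℝ) (hq : q.natDegree ≠ 0) :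
    (q.comp (X + 1) - q).natDegree < q.natDegree := by
  have hq0 : q ≠ 0 := fun h => hq (by simp [h])
  have hX1 : (X + 1 : Polynomial ℝ).natDegree = 1 := by
    simpa using natDegree_X_add_C (1 : ℝ)
  have hdeg : (q.comp (X + 1)).natDegree = q.natDegree := by
    rw [natDegree_comp, hX1, mul_one]
  have hlc : (q.comp (X + 1)).leadingCoeff = q.leadingCoeff := by
    rw [leadingCoeff_comp (by rw [hX1]; exact one_ne_zero)]
    have : (X + 1 : Polynomial ℝ).leadingCoeff = 1 := by
      simpa using leadingCoeff_X_add_C (1 : ℝ)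
    rw [this, one_pow, mul_one]
  have hcne : q.comp (X + 1) ≠ 0 := by
    intro h
    apply hq0
    rw [← leadingCoeff_eq_zero, ← hlc, h, leadingCoeff_zero]
  have hdlt := Polynomial.degree_sub_lt
    (by rw [degree_eq_natDegree hcne, degree_eq_natDegree hq0, hdeg]) hcne hlc
  by_cases h0 : q.comp (X + 1) - q = 0
  · rw [h0, natDegree_zero]; exact Nat.pos_of_ne_zero hq
  · refine natDegree_lt_natDegree h0 ?_
    rw [degree_eq_natDegree hcne, hdeg] at hdlt
    rw [degree_eq_natDegree hq0]
    exact hdlt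

lemma killed_geom : ∀ (d : ℕ) (q : Polynomial ℝ) (_ : q.natDegree ≤ d) (μ : ℝ),
    Killed ((X - C μ) ^ (d + 1)) (fun m => q.eval (m : ℝ) * μ ^ m) := by
  intro d
  induction d with
  | zero =>
    intro q hq μ
    unfold Killed
    rw [pow_one]
    rw [killed_linear_comb q _ rfl]
    have : q.comp (X + 1) - q = 0 := by
      rw [eq_C_of_natDegree_eq_zero (Nat.le_zero.1 hq)]
      simp
    rw [this]
    funext m
    simp
  | succ d ih =>
    intro q hq μ
    unfold Killed
    have hsplit : (X - C μ) ^ (d + 1 + 1) = (X - C μ) ^ (d + 1) * (X - C μ) := by ring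
    rw [hsplit, _root_.map_mul]
    show (aeval shiftE ((X - C μ) ^ (d+1))) ((aeval shiftE (X - C μ)) _) = 0
    rw [killed_linear_comb q _ rfl]
    apply ih
    by_cases h0 : q.natDegree = 0
    · have : q.comp (X + 1) - q = 0 := by
        rw [eq_C_of_natDegree_eq_zero h0]; simp
      rw [this, mul_zero]
      simp
    · have h1 := comp_sub_natDegree q h0
      have h2 : (C μ * (q.comp (X + 1) - q)).natDegree ≤ (q.comp (X + 1) - q).natDegree :=
        natDegree_C_mul_le _ _
      omega

lemma killed_zero_of_zero_init {p : Polynomial ℝ} (hmonic : p.Monic) {nn : ℕ}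
    (hdeg : p.natDegree = nn) (hnn : 1 ≤ nn) {v : ℕ → ℝ} (hv : Killed p v)
    (hinit : ∀ i < nn, v i = 0) : ∀ m, v m = 0 := by
  intro m
  induction m using Nat.strong_induction_on with
  | _ m ihm =>
  by_cases hm : m < nn
  · exact hinit m hm
  · push_neg at hm
    have hrec := killed_eval hv (m - nn)
    rw [hdeg] at hrec
    rw [Finset.sum_range_succ] at hrec
    have hlead : p.coeff nn = 1 := by
      have := hmonic.leadingCoeff
      rwa [leadingCoeff, hdeg] at this
    have hzero : ∑ i ∈ Finset.range nn, p.coeff i * v (m - nn + i) = 0 :=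
      Finset.sum_eq_zero (fun i hi => by
        rw [ihm (m - nn + i) (by
          have := Finset.mem_range.1 hi
          omega)]
        ring)
    rw [hzero, hlead, zero_add, one_mul] at hrec
    have : m - nn + nn = m := by omega
    rwa [this] at hrec

/-- Any sequence annihilated by `p = (X-1)·∏ (X-λ_j)^{n_j}` (positive distinct
bases `< 1`) which vanishes at `n = deg p` distinct naturals vanishes identically. -/
theorem seq_vanish (n r : ℕ) (hn : 2 ≤ n)
    (lam : Fin r → ℝ) (hlt1 : ∀ j, lam j < 1) (hpos : ∀ j, 0 < lam j)
    (hdec : ∀ i j : Fin r, i < j → lam j < lam i)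
    (nj : Fin r → ℕ) (hnj : ∀ j, 0 < nj j) (hsum : ∑ j, nj j = n - 1)
    (p : Polynomial ℝ) (hp : p = (X - 1) * ∏ j, (X - C (lam j)) ^ (nj j))
    (hmonic : p.Monic) (hpdeg : p.natDegree = n)
    (s : ℕ → ℝ) (hs : Killed p s)
    (Zn : Finset ℕ) (hcard : n ≤ Zn.card) (hzero : ∀ m ∈ Zn, s m = 0) :
    ∀ m, s m = 0 := by
  classical
  -- the data of bases and multiplicities
  set NN : Fin (r + 1) → ℕ := Fin.cons 1 nj with hNN
  set μ : Fin (r + 1) → ℝ := Fin.cons 1 lam with hμ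
  have hNpos : ∀ l, 0 < NN l := by
    intro l
    refine Fin.cases ?_ ?_ l
    · simp [hNN]
    · intro j; simpa [hNN] using hnj j
  have hμpos : ∀ l, 0 < μ l := by
    intro l
    refine Fin.cases ?_ ?_ l
    · simp [hμ]
    · intro j; simpa [hμ] using hpos j
  have laminj : Function.Injective lam := by
    intro i j hij
    rcases lt_trichotomy i j with h | h | h
    · exact absurd hij (ne_of_gt (hdec i j h))
    · exact h
    · exact absurd hij (ne_of_lt (hdec j i h))
  have hμinj : Function.Injective μ := by
    rw [hμ, Fin.cons_injective_iff]
    refine ⟨?_, laminj⟩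
    rintro ⟨j, hj⟩
    exact absurd hj (ne_of_lt (hlt1 j))
  have hNsum : ∑ l, NN l = n := by
    rw [hNN, Fin.sum_cons, hsum]
    omega
  -- divisibility of p by (X - μ l)^(NN l)
  have hdvd : ∀ l, (X - C (μ l)) ^ (NN l) ∣ p := by
    intro l
    refine Fin.cases ?_ ?_ l
    · rw [hp]
      have : ((X : Polynomial ℝ) - C (μ 0)) ^ (NN 0) = X - 1 := by
        simp [hμ, hNN]
      rw [this]
      exact dvd_mul_right _ _
    · intro j
      rw [hp]
      have h1 : ((X : Polynomial ℝ) - C (μ j.succ)) ^ (NN j.succ)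
          = (X - C (lam j)) ^ (nj j) := by simp [hμ, hNN]
      rw [h1]
      exact Dvd.dvd.mul_left (Finset.dvd_prod_of_mem _ (Finset.mem_univ j)) _
  -- the coefficient space
  let CS := ∀ l : Fin (r + 1), Polynomial.degreeLT ℝ (NN l)
  have instFD : ∀ l : Fin (r + 1), FiniteDimensional ℝ (Polynomial.degreeLT ℝ (NN l)) :=
    fun l => Module.Finite.equiv (Polynomial.degreeLTEquiv ℝ (NN l)).symm
  have hfrk : Module.finrank ℝ CS = n := by
    rw [Module.finrank_pi_fintype]
    rw [← hNsum]
    refine Finset.sum_congr rfl (fun l _ => ?_)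
    rw [(Polynomial.degreeLTEquiv ℝ (NN l)).finrank_eq]
    simp
  -- the sequence associated to coefficients
  let seqOf : CS → (ℕ → ℝ) := fun c => fun m => ∑ l, ((c l : Polynomial ℝ)).eval (m : ℝ) * (μ l) ^ m
  have hdegc : ∀ (c : CS) (l : Fin (r + 1)), ((c l : Polynomial ℝ)).natDegree ≤ NN l - 1 := by
    intro c l
    have hmem := (c l).2
    rw [Polynomial.mem_degreeLT] at hmem
    by_cases h0 : (c l : Polynomial ℝ) = 0
    · rw [h0]
      simp
    · have := Polynomial.natDegree_lt_iff_degree_lt h0 |>.2 (by exact_mod_cast hmem)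
      have hl := hNpos l
      omega
  have hkilled : ∀ c : CS, Killed p (seqOf c) := by
    intro c
    refine killed_sum (fun l => fun m => ((c l : Polynomial ℝ)).eval (m : ℝ) * (μ l) ^ m) ?_
    intro l
    refine killed_of_dvd ?_ (killed_geom (NN l - 1) _ (hdegc c l) (μ l))
    have : NN l - 1 + 1 = NN l := by have := hNpos l; omega
    rw [this]
    exact hdvd l
  -- ep representation of seqOf over the reals
  set aa : Fin (r + 1) → ℝ := fun l => Real.log (μ l) with haa
  have haainj : Function.Injective aa := by
    intro x y hxy
    apply hμinj
    have hexy : Real.exp (aa x) = Real.exp (aa y) := by rw [hxy]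
    rwa [Real.exp_log (hμpos x), Real.exp_log (hμpos y)] at hexy
  have hepeq : ∀ (c : CS) (m : ℕ), ep aa (fun l => (c l : Polynomial ℝ)) (m : ℝ) = seqOf c m := by
    intro c m
    unfold ep
    refine Finset.sum_congr rfl (fun l _ => ?_)
    congr 1
    rw [haa, mul_comm, Real.exp_nat_mul, Real.exp_log (hμpos l)]
  have hdegsum : ∀ c : CS, (∑ l, (((c l : Polynomial ℝ)).natDegree + 1)) ≤ n := by
    intro c
    rw [← hNsum]
    refine Finset.sum_le_sum (fun l _ => ?_)
    have h1 := hdegc c l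
    have h2 := hNpos l
    omega
  -- a coefficient vector vanishing at n distinct naturals is zero
  have hzc : ∀ (c : CS) (Z : Finset ℕ), n ≤ Z.card → (∀ m ∈ Z, seqOf c m = 0) →
      ∀ l, (c l : Polynomial ℝ) = 0 := by
    intro c Z hZc hZ0
    have hinj : Function.Injective (fun m : ℕ => (m : ℝ)) := fun a b hab => Nat.cast_injective hab
    refine zc n (r + 1) aa haainj _ (hdegsum c) (Z.image (fun m : ℕ => (m : ℝ)))
      (by rw [Finset.card_image_of_injective _ hinj]; exact hZc) ?_
    intro x hx
    rcases Finset.mem_image.1 hx with ⟨m, hm, rfl⟩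
    rw [hepeq c m]
    exact hZ0 m hm
  -- linear map to initial values
  let Φ : CS →ₗ[ℝ] (Fin n → ℝ) :=
    { toFun := fun c => fun i => seqOf c i
      map_add' := by
        intro c d
        funext i
        show seqOf (c + d) i = seqOf c i + seqOf d i
        show (∑ l, ((c + d) l : Polynomial ℝ).eval ((i : ℕ) : ℝ) * (μ l) ^ (i : ℕ)) = _
        rw [← Finset.sum_add_distrib]
        refine Finset.sum_congr rfl (fun l _ => ?_)
        have hcd : ((c + d) l : Polynomial ℝ) = (c l : Polynomial ℝ) + (d l : Polynomial ℝ) := rfl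
        rw [hcd, Polynomial.eval_add]
        ring
      map_smul' := by
        intro x c
        funext i
        simp only [RingHom.id_apply, Pi.smul_apply, smul_eq_mul]
        show seqOf (x • c) i = x * seqOf c i
        show (∑ l, ((x • c) l : Polynomial ℝ).eval ((i : ℕ) : ℝ) * (μ l) ^ (i : ℕ)) = _
        rw [Finset.mul_sum]
        refine Finset.sum_congr rfl (fun l _ => ?_)
        have hxc : ((x • c) l : Polynomial ℝ) = x • (c l : Polynomial ℝ) := rfl
        rw [hxc, Polynomial.eval_smul, smul_eq_mul]
        ring }
  have hΦapp : ∀ (c : CS) (i : Fin n), Φ c i = seqOf c i := fun c i => rfl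
  have hΦinj : Function.Injective Φ := by
    rw [← LinearMap.ker_eq_bot, LinearMap.ker_eq_bot']
    intro c hc
    have hz0 : ∀ m ∈ Finset.range n, seqOf c m = 0 := by
      intro m hm
      have hmn : m < n := Finset.mem_range.1 hm
      have h1 := congrFun hc (⟨m, hmn⟩ : Fin n)
      rw [hΦapp c ⟨m, hmn⟩] at h1
      exact h1
    have hcl := hzc c (Finset.range n) (by rw [Finset.card_range]) hz0
    funext l
    exact Subtype.ext (hcl l)
  haveI : ∀ l : Fin (r + 1), FiniteDimensional ℝ (Polynomial.degreeLT ℝ (NN l)) := instFD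
  have hΦsurj : Function.Surjective Φ := by
    refine (LinearMap.injective_iff_surjective_of_finrank_eq_finrank ?_).1 hΦinj
    rw [hfrk, Module.finrank_pi, Fintype.card_fin]
  -- bridge: represent s as an exponential polynomial
  obtain ⟨c, hc⟩ := hΦsurj (fun i : Fin n => s i)
  have hvkilled : Killed p (s - seqOf c) := killed_sub hs (hkilled c)
  have hvinit : ∀ i < n, (s - seqOf c) i = 0 := by
    intro i hi
    have h1 := congrFun hc (⟨i, hi⟩ : Fin n)
    rw [hΦapp c ⟨i, hi⟩] at h1
    show s i - seqOf c i = 0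
    rw [h1]
    ring
  have hveq := killed_zero_of_zero_init hmonic hpdeg (by omega) hvkilled hvinit
  have hseq : ∀ m, s m = seqOf c m := by
    intro m
    have := hveq m
    have h2 : s m - seqOf c m = 0 := this
    linarith
  have hcl := hzc c Zn hcard (fun m hm => by rw [← hseq m]; exact hzero m hm)
  intro m
  rw [hseq m]
  exact Finset.sum_eq_zero (fun l _ => by rw [hcl l]; simp)

/-- Lower bound for cone-generated positive realizations: if `H(z)` has McMillan degree `n`,
positive real poles `λ_j ∈ (0,1)` of multiplicities `n_j` (plus the simple dominant pole at 1),
and its impulse response satisfies `t_{k₀} = 0` and `t_k > 0` for `k > k₀`, then any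
cone-generated positive realization of dimension `M` satisfies `M(n−1) ≥ k₀`. -/
theorem cone_generated_lower_bound
    (n r : ℕ) (hn : 2 ≤ n) (hr : 1 ≤ r)
    (lam : Fin r → ℝ) (hlt1 : ∀ j, lam j < 1) (hpos : ∀ j, 0 < lam j)
    (hdec : ∀ i j : Fin r, i < j → lam j < lam i)
    (nj : Fin r → ℕ) (hnj : ∀ j, 0 < nj j) (hsum : ∑ j, nj j = n - 1)
    (F : Matrix (Fin n) (Fin n) ℝ)
    (hF : F.charpoly = (X - 1) * ∏ j, (X - C (lam j)) ^ (nj j))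
    (h g : Fin n → ℝ) (t : ℕ → ℝ)
    (ht : ∀ k : ℕ, 1 ≤ k → t k = h ⬝ᵥ (F ^ (k - 1)).mulVec g)
    (k0 : ℕ) (hk0 : 1 ≤ k0) (htk0 : t k0 = 0) (htpos : ∀ k, k0 < k → 0 < t k)
    (M : ℕ) (hM : 1 ≤ M)
    (P : Matrix (Fin n) (Fin M) ℝ) (A : Matrix (Fin M) (Fin M) ℝ) (b c : Fin M → ℝ)
    (hA : ∀ i j, 0 ≤ A i j) (hb : ∀ i, 0 ≤ b i) (hc : ∀ i, 0 ≤ c i)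
    (hFP : F * P = P * A) (hPb : P.mulVec b = g) (hcP : c = Matrix.vecMul h P) :
    k0 ≤ M * (n - 1) := by
  classical
  set p : Polynomial ℝ := F.charpoly with hpdef
  have hmonic : p.Monic := F.charpoly_monic
  have hpdeg : p.natDegree = n := by
    rw [hpdef, Matrix.charpoly_natDegree_eq_dim, Fintype.card_fin]
  set K : ℕ := k0 - 1 with hK
  -- the two vector sequences
  set gam : ℕ → (Fin M → ℝ) := fun m => Matrix.vecMul h (F ^ m * P) with hgam
  set bet : ℕ → (Fin M → ℝ) := fun τ => (A ^ τ).mulVec b with hbet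
  -- intertwining
  have hPA : ∀ τ : ℕ, P * A ^ τ = F ^ τ * P := by
    intro τ
    induction τ with
    | zero => simp
    | succ τ ih =>
      calc P * A ^ (τ + 1) = (P * A ^ τ) * A := by rw [pow_succ, Matrix.mul_assoc]
        _ = F ^ τ * (P * A) := by rw [ih, Matrix.mul_assoc]
        _ = F ^ τ * (F * P) := by rw [hFP]
        _ = F ^ (τ + 1) * P := by rw [pow_succ, Matrix.mul_assoc]
  -- gam in terms of c and A
  have hgamA : ∀ m, gam m = Matrix.vecMul c (A ^ m) := by
    intro m
    show Matrix.vecMul h (F ^ m * P) = Matrix.vecMul c (A ^ m)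
    rw [hcP, Matrix.vecMul_vecMul, hPA]
  -- nonnegativity of powers of A
  have hApow : ∀ (m : ℕ) (i j : Fin M), 0 ≤ (A ^ m) i j := by
    intro m
    induction m with
    | zero =>
      intro i j
      rw [pow_zero]
      by_cases hij : i = j <;> simp [Matrix.one_apply, hij]
    | succ m ih =>
      intro i j
      rw [pow_succ]
      have : (A ^ m * A) i j = ∑ l, (A ^ m) i l * A l j := rfl
      rw [this]
      exact Finset.sum_nonneg (fun l _ => mul_nonneg (ih i l) (hA l j))
  have hgamnn : ∀ m j, 0 ≤ gam m j := by
    intro m j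
    rw [hgamA]
    have : Matrix.vecMul c (A ^ m) j = ∑ i, c i * (A ^ m) i j := rfl
    rw [this]
    exact Finset.sum_nonneg (fun i _ => mul_nonneg (hc i) (hApow m i j))
  have hbetnn : ∀ τ j, 0 ≤ bet τ j := by
    intro τ j
    have : bet τ j = ∑ i, (A ^ τ) j i * b i := rfl
    rw [this]
    exact Finset.sum_nonneg (fun i _ => mul_nonneg (hApow τ j i) (hb i))
  -- splitting of the impulse response
  have hsplit : ∀ s τ : ℕ, h ⬝ᵥ (F ^ (s + τ)).mulVec g = gam s ⬝ᵥ bet τ := by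
    intro s τ
    rw [hgam, hbet, ← Matrix.dotProduct_mulVec, Matrix.mulVec_mulVec]
    rw [Matrix.mul_assoc (F ^ s) P (A ^ τ), hPA τ, ← Matrix.mul_assoc]
    rw [← pow_add, ← Matrix.mulVec_mulVec, hPb]
  -- each coordinate of gam is annihilated by the characteristic polynomial
  have hkilled : ∀ j, Killed p (fun m => gam m j) := by
    intro j
    apply killed_of_sum
    intro m
    -- linear functional trick
    let L : Matrix (Fin n) (Fin n) ℝ →ₗ[ℝ] ℝ :=
      { toFun := fun X => Matrix.vecMul h (X * P) j
        map_add' := by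
          intro X Y
          show Matrix.vecMul h ((X + Y) * P) j
            = Matrix.vecMul h (X * P) j + Matrix.vecMul h (Y * P) j
          rw [Matrix.add_mul, Matrix.vecMul_add]
          rfl
        map_smul' := by
          intro x X
          show Matrix.vecMul h ((x • X) * P) j = x • (Matrix.vecMul h (X * P) j)
          rw [Matrix.smul_mul]
          show (∑ i, h i * (x • (X * P)) i j) = x • ∑ i, h i * (X * P) i j
          rw [Finset.smul_sum]
          refine Finset.sum_congr rfl (fun i _ => ?_)
          rw [Matrix.smul_apply, smul_eq_mul, smul_eq_mul]
          ring }
    have hLgam : ∀ i, gam (m + i) j = L (F ^ m * F ^ i) := by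
      intro i
      rw [hgam, ← pow_add]
      rfl
    have hstep : ∑ i ∈ Finset.range (p.natDegree + 1), p.coeff i * gam (m + i) j
        = L (F ^ m * ∑ i ∈ Finset.range (p.natDegree + 1), p.coeff i • F ^ i) := by
      rw [Finset.mul_sum, map_sum]
      refine Finset.sum_congr rfl (fun i _ => ?_)
      rw [hLgam i, Matrix.mul_smul, LinearMap.map_smul, smul_eq_mul]
    rw [hstep]
    have hCH : (∑ i ∈ Finset.range (p.natDegree + 1), p.coeff i • F ^ i) = 0 := by
      rw [← Polynomial.aeval_eq_sum_range, hpdef]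
      exact F.aeval_self_charpoly
    rw [hCH, Matrix.mul_zero, map_zero]
  -- u K = 0 and u (K+1+τ) > 0
  have huK : ∀ τ, τ ≤ K → gam (K - τ) ⬝ᵥ bet τ = 0 := by
    intro τ hτ
    have hks : K - τ + τ = K := by omega
    rw [← hsplit, hks]
    have h1 : t k0 = h ⬝ᵥ (F ^ K).mulVec g := by
      rw [ht k0 hk0]
    rw [← h1, htk0]
  have huPos : ∀ τ : ℕ, 0 < gam (K + 1) ⬝ᵥ bet τ := by
    intro τ
    rw [← hsplit]
    have hklarge : k0 < K + 2 + τ := by omega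
    have h1 := ht (K + 2 + τ) (by omega)
    have h2 : K + 2 + τ - 1 = K + 1 + τ := by omega
    rw [h2] at h1
    rw [← h1]
    exact htpos _ hklarge
  -- the witness sets
  set Tset : Fin M → Finset ℕ :=
    fun j => (Finset.range (K + 1)).filter (fun τ => 0 < bet τ j ∧ 0 < gam (K + 1) j)
    with hTset
  -- covering
  have hcover : Finset.range (K + 1) ⊆ Finset.univ.biUnion Tset := by
    intro τ hτ
    have hpos' := huPos τ
    have : ∃ j, 0 < gam (K + 1) j * bet τ j := by
      by_contra hcon
      push_neg at hcon
      have : gam (K + 1) ⬝ᵥ bet τ ≤ 0 := by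
        have : gam (K + 1) ⬝ᵥ bet τ = ∑ j, gam (K + 1) j * bet τ j := rfl
        rw [this]
        exact Finset.sum_nonpos (fun j _ => hcon j)
      linarith
    obtain ⟨j, hj⟩ := this
    have hg : 0 < gam (K + 1) j := by
      rcases lt_or_ge 0 (gam (K + 1) j) with h' | h'
      · exact h'
      · nlinarith [hbetnn τ j]
    have hbj : 0 < bet τ j := by nlinarith [hgamnn (K + 1) j]
    refine Finset.mem_biUnion.2 ⟨j, Finset.mem_univ j, ?_⟩
    rw [hTset]
    exact Finset.mem_filter.2 ⟨hτ, hbj, hg⟩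
  -- cardinality bound per state
  have hcardT : ∀ j, (Tset j).card ≤ n - 1 := by
    intro j
    by_contra hcon
    push_neg at hcon
    have hcard' : n ≤ (Tset j).card := by omega
    -- gamma_j vanishes on the image
    set Zn : Finset ℕ := (Tset j).image (fun τ => K - τ) with hZn
    have hinj : ∀ τ1 ∈ Tset j, ∀ τ2 ∈ Tset j, K - τ1 = K - τ2 → τ1 = τ2 := by
      intro τ1 h1 τ2 h2 he
      have hr1 : τ1 < K + 1 := Finset.mem_range.1 (Finset.mem_filter.1 h1).1
      have hr2 : τ2 < K + 1 := Finset.mem_range.1 (Finset.mem_filter.1 h2).1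
      omega
    have hZncard : n ≤ Zn.card := by
      rw [hZn, Finset.card_image_of_injOn hinj]
      exact hcard'
    have hvanish : ∀ m ∈ Zn, gam m j = 0 := by
      intro m hm
      rcases Finset.mem_image.1 hm with ⟨τ, hτm, rfl⟩
      have hfil := Finset.mem_filter.1 hτm
      have hτK : τ ≤ K := by
        have := Finset.mem_range.1 hfil.1
        omega
      have h0 := huK τ hτK
      have hterms : ∀ i : Fin M, 0 ≤ gam (K - τ) i * bet τ i :=
        fun i => mul_nonneg (hgamnn _ i) (hbetnn _ i)
      have heach : gam (K - τ) j * bet τ j = 0 := by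
        have hsum : (∑ i, gam (K - τ) i * bet τ i) = 0 := h0
        have := (Finset.sum_eq_zero_iff_of_nonneg (fun i _ => hterms i)).1 hsum j
          (Finset.mem_univ j)
        exact this
      have hbpos := hfil.2.1
      rcases mul_eq_zero.1 heach with h' | h'
      · exact h'
      · exact absurd h' (ne_of_gt hbpos)
    have hzero := seq_vanish n r hn lam hlt1 hpos hdec nj hnj hsum p hF
      hmonic hpdeg (fun m => gam m j) (hkilled j) Zn hZncard hvanish
    -- but gam (K+1) j > 0
    have hne : (Tset j).Nonempty := Finset.card_pos.1 (by omega)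
    obtain ⟨τ0, hτ0⟩ := hne
    have hgp := (Finset.mem_filter.1 hτ0).2.2
    have h00 : gam (K + 1) j = 0 := hzero (K + 1)
    rw [h00] at hgp
    exact lt_irrefl 0 hgp
  -- final count
  have hfinal : K + 1 ≤ M * (n - 1) := by
    calc K + 1 = (Finset.range (K + 1)).card := by rw [Finset.card_range]
      _ ≤ (Finset.univ.biUnion Tset).card := Finset.card_le_card hcover
      _ ≤ ∑ j, (Tset j).card := Finset.card_biUnion_le
      _ ≤ ∑ _j : Fin M, (n - 1) := Finset.sum_le_sum (fun j _ => hcardT j)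
      _ = M * (n - 1) := by rw [Finset.sum_const, Finset.card_univ, Fintype.card_fin, smul_eq_mul]
  omega

end ConeGeneratedAux
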